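/- The dummy-insertion map ι : C^ω → C^ω (extending the inductively defined insertion on finite sequences that inserts a fixed dummy move c_0 whenever the same player would move twice in a row) is injective, its image ι(C^ω) is a closed subset of C^ω, and ι(γC^ω) = ι(γ)C^ω ∩ ι(C^ω) for every finite sequence γ. -/

import Mathlib

variable {C A O : Type*}

/-- The prefix of length `n` of an infinite play. -/
def pref (p : ℕ → C) (n : ℕ) : List C := List.ofFn (fun i : Fin n => p (i : ℕ))

/-- Plays compatible with a partial strategy profile. -/
def Plays (s : List C → Option C) : Set (ℕ → C) :=
  {p | ∀ (n : ℕ) (c : C), s (pref p n) = some c → p n = c}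

/-- The history of length n induced by a total strategy profile. -/
def hist (t : List C → C) : ℕ → List C
  | 0 => []
  | n + 1 => hist t n ++ [t (hist t n)]

/-- The play induced by a total strategy profile: p(t)_n = t(p(t)_{<n}). -/
def play (t : List C → C) (n : ℕ) : C := t (hist t n)

open Classical in
/-- Restriction of a partial strategy profile to a set of histories. -/
noncomputable def restr (s : List C → Option C) (X : Set (List C)) (γ : List C) : Option C :=
  if γ ∈ X then s γ else none

/-- Restriction of a total strategy profile to a set of histories (as a partial one). -/
noncomputable def restrT (s : List C → C) (X : Set (List C)) : List C → Option C :=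
  restr (fun γ => some (s γ)) X

/-- γC^* : finite sequences extending γ. -/
def ext (γ : List C) : Set (List C) := {δ | γ <+: δ}

/-- γC^ω : infinite sequences extending γ. -/
def extω (γ : List C) : Set (ℕ → C) := {p | pref p γ.length = γ}


universe u

/-- Quasi-Borel sets of a topological space (Martin 1990). -/
inductive QuasiBorel {X : Type u} [TopologicalSpace X] : Set X → Prop
  | isOpen : ∀ U : Set X, IsOpen U → QuasiBorel U
  | compl : ∀ A : Set X, QuasiBorel A → QuasiBorel Aᶜ
  | iUnion : ∀ f : ℕ → Set X, (∀ n, QuasiBorel (f n)) → QuasiBorel (⋃ n, f n)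
  | sepUnion : ∀ (J : Type u) (B D : J → Set X),
      (∀ j, QuasiBorel (B j)) → (∀ j, IsOpen (D j)) →
      (∀ i j, i ≠ j → Disjoint (D i) (D j)) → (∀ j, B j ⊆ D j) →
      QuasiBorel (⋃ j, B j)

/-- The product of the discrete topology on C^ω. -/
def seqTop (C : Type u) : TopologicalSpace (ℕ → C) :=
  @Pi.topologicalSpace ℕ (fun _ => C) (fun _ => ⊥)

/-- Quasi-Borel subsets of C^ω with the product of the discrete topology. -/
def QB {C : Type u} (W : Set (ℕ → C)) : Prop :=
  @QuasiBorel (ℕ → C) (seqTop C) W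

variable {C : Type u}

open Classical in
/-- Dummy-insertion on finite sequences, processing from prefix `pre`. -/
noncomputable def iotaFrom (D : Set (List C)) (c0 : C) : List C → List C → List C
  | _, [] => []
  | pre, c :: rest =>
      (if ((pre ∈ D) ↔ (pre ++ [c] ∈ D)) then [c, c0] else [c]) ++
        iotaFrom D c0 (pre ++ [c]) rest

/-- Dummy-insertion map ι on finite sequences. -/
noncomputable def iota (D : Set (List C)) (c0 : C) (γ : List C) : List C :=
  iotaFrom D c0 [] γ

/-- Dummy-insertion map ι on infinite sequences: ι(α)_n is the n-th entry of
ι applied to a long enough prefix of α. -/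
noncomputable def iotaSeq (D : Set (List C)) (c0 : C) (α : ℕ → C) (n : ℕ) : C :=
  (iota D c0 (List.ofFn (fun i : Fin (n + 1) => α (i : ℕ)))).getD n c0

/-!
All that matters about ι is that, reading letter `c` after `γ`, it writes `ι γ ++ c :: l` for
some padding `l`. So the letters of `α` sit in `ι(α)` at the known
positions `|ι(α_{<k})|`, and `α` can be read back off `ι(α)` one letter at a time; this gives
injectivity and `ι(γC^ω) = ι(γ)C^ω ∩ ι(C^ω)`. For closedness, the same reading procedure,
applied to a sequence `p` each of whose prefixes extends to some `ι(β)`, produces an `α` with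
`ι(α) = p`.
-/

open Function Set

lemma length_pref (p : ℕ → C) (n : ℕ) : (pref p n).length = n := List.length_ofFn

lemma pref_succ (p : ℕ → C) (n : ℕ) : pref p (n + 1) = pref p n ++ [p n] := by
  simpa [pref] using List.ofFn_succ' fun i : Fin (n + 1) => p i

lemma mem_extω_iff {p : ℕ → C} {γ : List C} :
    p ∈ extω γ ↔ ∀ i (hi : i < γ.length), p i = γ[i] := by
  simp only [extω, Set.mem_ofPred_eq, List.ext_getElem_iff, pref, List.getElem_ofFn,
    List.length_ofFn, true_and]
  exact forall_congr' fun i => ⟨fun h hi => h hi hi, fun h hi _ => h hi⟩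

lemma mem_extω_pref_iff {p q : ℕ → C} {n : ℕ} : q ∈ extω (pref p n) ↔ ∀ i < n, q i = p i := by
  simp [mem_extω_iff, pref]

lemma mem_extω_pref (p : ℕ → C) (n : ℕ) : p ∈ extω (pref p n) :=
  mem_extω_pref_iff.2 fun _ _ => rfl

lemma mem_extω_nil (p : ℕ → C) : p ∈ extω [] := rfl

lemma mem_extω_of_prefix {p : ℕ → C} {γ δ : List C} (h : γ <+: δ) (hp : p ∈ extω δ) :
    p ∈ extω γ :=
  mem_extω_iff.2 fun i hi => by
    rw [mem_extω_iff.1 hp i (hi.trans_le h.length_le), h.getElem]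

lemma mem_extω_append_singleton {p : ℕ → C} {γ : List C} {c : C} :
    p ∈ extω (γ ++ [c]) ↔ p ∈ extω γ ∧ p γ.length = c := by
  constructor
  · intro h
    refine ⟨mem_extω_of_prefix (List.prefix_append γ [c]) h, ?_⟩
    simpa using mem_extω_iff.1 h γ.length (by simp)
  · rintro ⟨h, rfl⟩
    refine mem_extω_iff.2 fun i hi => ?_
    rw [List.getElem_append]
    split_ifs with hiγ
    · exact mem_extω_iff.1 h i hiγ
    · obtain rfl : i = γ.length := by simp at hi; omega
      simp

lemma mem_extω_congr {p q : ℕ → C} {n : ℕ} {γ : List C} (hq : q ∈ extω (pref p n))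
    (hγ : γ.length ≤ n) : q ∈ extω γ ↔ p ∈ extω γ := by
  have hqp := mem_extω_pref_iff.1 hq
  simp only [mem_extω_iff]
  exact forall_congr' fun i => forall_congr' fun hi => by rw [hqp i (hi.trans_le hγ)]

lemma pref_prefix_pref (p : ℕ → C) {m n : ℕ} (h : m ≤ n) : pref p m <+: pref p n :=
  List.prefix_iff_eq_take.2 (List.ext_getElem (by simp [pref]; omega) (by simp [pref]))

lemma isOpen_extω (γ : List C) : @IsOpen _ (seqTop C) (extω γ) := by
  let : TopologicalSpace C := ⊥
  have := discreteTopology_bot C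
  have : extω γ = ⋂ i : Fin γ.length, (fun p : ℕ → C => p i) ⁻¹' {γ[i]} := by
    ext p
    simp [mem_extω_iff, Fin.forall_iff]
  rw [this]
  exact isOpen_iInter_of_finite fun i =>
    (continuous_apply (i : ℕ)).isOpen_preimage _ (isOpen_discrete _)

lemma isClosed_of_forall_extω_pref {S : Set (ℕ → C)}
    (hS : ∀ p, (∀ n, ∃ q ∈ S, q ∈ extω (pref p n)) → p ∈ S) : @IsClosed _ (seqTop C) S := by
  let := seqTop C
  rw [← isOpen_compl_iff, isOpen_iff_forall_mem_open]
  intro p hp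
  obtain ⟨n, hn⟩ := not_forall.1 (mt (hS p) hp)
  exact ⟨extω (pref p n), fun q hq hqS => hn ⟨q, hqS, hq⟩, isOpen_extω _, mem_extω_pref p n⟩

def IsPaddingMap (f : List C → List C) : Prop :=
  ∀ γ c, ∃ l, f (γ ++ [c]) = f γ ++ c :: l

/-- `iotaSeq D c0` is `liftSeq (iota D c0) c0` by definition. -/
def liftSeq (f : List C → List C) (d : C) (α : ℕ → C) (n : ℕ) : C :=
  (f (pref α (n + 1))).getD n d

/-- The candidate preimage of `p` under `liftSeq f d`, read off `p` one letter at a time. -/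
def unpad (f : List C → List C) (p : ℕ → C) : ℕ → List C
  | 0 => []
  | n + 1 => unpad f p n ++ [p (f (unpad f p n)).length]

namespace IsPaddingMap

variable {f : List C → List C}

theorem prefix_append (hf : IsPaddingMap f) (γ δ : List C) : f γ <+: f (γ ++ δ) := by
  induction δ using List.reverseRecOn with
  | nil => simp
  | append_singleton δ c ih =>
    obtain ⟨l, hl⟩ := hf (γ ++ δ) c
    rw [← List.append_assoc, hl]
    exact ih.trans (List.prefix_append _ _)

theorem monotone (hf : IsPaddingMap f) {γ δ : List C} (h : γ <+: δ) : f γ <+: f δ := by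
  obtain ⟨t, rfl⟩ := h
  exact hf.prefix_append γ t

theorem length_lt (hf : IsPaddingMap f) (γ : List C) (c : C) :
    (f γ).length < (f (γ ++ [c])).length := by
  obtain ⟨l, hl⟩ := hf γ c
  simp [hl]

theorem length_le (hf : IsPaddingMap f) (γ : List C) : γ.length ≤ (f γ).length := by
  induction γ using List.reverseRecOn with
  | nil => simp
  | append_singleton γ c ih =>
    have := hf.length_lt γ c
    simp only [List.length_append, List.length_singleton]
    omega

theorem apply_length_of_mem_extω (hf : IsPaddingMap f) {p : ℕ → C} {γ : List C} {c : C}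
    (h : p ∈ extω (f (γ ++ [c]))) : p (f γ).length = c := by
  obtain ⟨l, hl⟩ := hf γ c
  rw [hl] at h
  exact (mem_extω_append_singleton.1 (mem_extω_of_prefix ⟨l, by simp⟩ h)).2

theorem liftSeq_apply_eq_getElem (hf : IsPaddingMap f) (d : C) (α : ℕ → C) {n i : ℕ}
    (hi : i < (f (pref α n)).length) : liftSeq f d α i = (f (pref α n))[i] := by
  have hi' : i < (f (pref α (i + 1))).length :=
    (hf.length_le _).trans_lt' (by rw [length_pref]; omega)
  rw [liftSeq, List.getD_eq_getElem _ _ hi']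
  rcases le_total (i + 1) n with h | h
  · exact (hf.monotone (pref_prefix_pref α h)).getElem hi'
  · exact ((hf.monotone (pref_prefix_pref α h)).getElem hi).symm

theorem liftSeq_mem_extω (hf : IsPaddingMap f) (d : C) {α : ℕ → C} {γ : List C}
    (h : α ∈ extω γ) : liftSeq f d α ∈ extω (f γ) := by
  have hγ : pref α γ.length = γ := h
  rw [← hγ]
  exact mem_extω_iff.2 fun i hi => hf.liftSeq_apply_eq_getElem d α hi

theorem mem_extω_append_singleton_of_liftSeq (hf : IsPaddingMap f) (d : C) {β : ℕ → C}
    {δ : List C} {c : C} (hβ : β ∈ extω δ) (hc : liftSeq f d β (f δ).length = c) :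
    β ∈ extω (δ ++ [c]) := by
  have hβ' : β ∈ extω (δ ++ [β δ.length]) := mem_extω_append_singleton.2 ⟨hβ, rfl⟩
  rwa [← hc, hf.apply_length_of_mem_extω (hf.liftSeq_mem_extω d hβ')]

theorem liftSeq_mem_extω_iff (hf : IsPaddingMap f) (d : C) {β : ℕ → C} {δ : List C} :
    liftSeq f d β ∈ extω (f δ) ↔ β ∈ extω δ := by
  refine ⟨fun h => ?_, hf.liftSeq_mem_extω d⟩
  induction δ using List.reverseRecOn with
  | nil => exact mem_extω_nil β
  | append_singleton δ c ih =>
    exact hf.mem_extω_append_singleton_of_liftSeq d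
      (ih (mem_extω_of_prefix (hf.prefix_append δ [c]) h)) (hf.apply_length_of_mem_extω h)

theorem liftSeq_injective (hf : IsPaddingMap f) (d : C) : Injective (liftSeq f d) := by
  intro α β h
  funext n
  have hβ : β ∈ extω (pref α (n + 1)) :=
    (hf.liftSeq_mem_extω_iff d).1 (h ▸ hf.liftSeq_mem_extω d (mem_extω_pref α (n + 1)))
  exact (mem_extω_pref_iff.1 hβ n n.lt_succ_self).symm

theorem image_liftSeq_extω (hf : IsPaddingMap f) (d : C) (γ : List C) :
    liftSeq f d '' extω γ = extω (f γ) ∩ range (liftSeq f d) := by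
  ext p
  constructor
  · rintro ⟨α, hα, rfl⟩
    exact ⟨hf.liftSeq_mem_extω d hα, α, rfl⟩
  · rintro ⟨hp, α, rfl⟩
    exact ⟨α, (hf.liftSeq_mem_extω_iff d).1 hp, rfl⟩

theorem mem_extω_unpad (hf : IsPaddingMap f) (d : C) {p : ℕ → C}
    (hp : ∀ n, ∃ β, liftSeq f d β ∈ extω (pref p n)) (n : ℕ) : p ∈ extω (f (unpad f p n)) := by
  induction n with
  | zero =>
    obtain ⟨β, hβ⟩ := hp (f []).length
    exact (mem_extω_congr hβ le_rfl).1 (hf.liftSeq_mem_extω d (mem_extω_nil β))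
  | succ n ih =>
    set A := unpad f p n
    obtain ⟨β, hβ⟩ := hp (f (A ++ [p (f A).length])).length
    have hA : β ∈ extω A := (hf.liftSeq_mem_extω_iff d).1
      ((mem_extω_congr hβ (hf.prefix_append A _).length_le).2 ih)
    have hc : liftSeq f d β (f A).length = p (f A).length :=
      mem_extω_pref_iff.1 hβ _ (hf.length_lt A _)
    exact (mem_extω_congr hβ le_rfl).1
      (hf.liftSeq_mem_extω d (hf.mem_extω_append_singleton_of_liftSeq d hA hc))

theorem mem_range_liftSeq (hf : IsPaddingMap f) (d : C) {p : ℕ → C}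
    (hp : ∀ n, ∃ β, liftSeq f d β ∈ extω (pref p n)) : p ∈ range (liftSeq f d) := by
  set α : ℕ → C := fun n => p (f (unpad f p n)).length
  have hα : ∀ n, pref α n = unpad f p n := by
    intro n
    induction n with
    | zero => rfl
    | succ n ih => rw [pref_succ, ih]; rfl
  refine ⟨α, funext fun n => ?_⟩
  have hn : n < (f (pref α (n + 1))).length := (hf.length_le _).trans_lt' (by simp [length_pref])
  have hlift := hf.liftSeq_mem_extω d (mem_extω_pref α (n + 1))
  have hunpad := hf.mem_extω_unpad d hp (n + 1)
  rw [← hα] at hunpad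
  rw [mem_extω_iff.1 hlift n hn, mem_extω_iff.1 hunpad n hn]

theorem isClosed_range_liftSeq (hf : IsPaddingMap f) (d : C) :
    @IsClosed _ (seqTop C) (range (liftSeq f d)) :=
  isClosed_of_forall_extω_pref fun _ hp => hf.mem_range_liftSeq d fun n => by
    obtain ⟨_, ⟨β, rfl⟩, hβ⟩ := hp n
    exact ⟨β, hβ⟩

end IsPaddingMap

lemma iotaFrom_append (D : Set (List C)) (c0 : C) (pre l₁ l₂ : List C) :
    iotaFrom D c0 pre (l₁ ++ l₂) = iotaFrom D c0 pre l₁ ++ iotaFrom D c0 (pre ++ l₁) l₂ := by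
  induction l₁ generalizing pre with
  | nil => simp [iotaFrom]
  | cons c l₁ ih =>
    simp only [List.cons_append, iotaFrom, ih, List.append_assoc, List.nil_append]

lemma isPaddingMap_iota (D : Set (List C)) (c0 : C) : IsPaddingMap (iota D c0) := by
  classical
  intro γ c
  refine ⟨if γ ∈ D ↔ γ ++ [c] ∈ D then [c0] else [], ?_⟩
  rw [iota, iota, iotaFrom_append]
  split_ifs <;> simp [iotaFrom, *]

theorem iota_properties_general {C : Type u} (D : Set (List C)) (c0 : C) :
    Function.Injective (iotaSeq D c0) ∧
    @IsClosed _ (seqTop C) (Set.range (iotaSeq D c0)) ∧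
    ∀ γ : List C,
      iotaSeq D c0 '' extω γ = extω (iota D c0 γ) ∩ Set.range (iotaSeq D c0) := by
  have hι := isPaddingMap_iota D c0
  exact ⟨hι.liftSeq_injective c0, hι.isClosed_range_liftSeq c0, hι.image_liftSeq_extω c0⟩

/-- The dummy-insertion map ι on infinite sequences is injective,
has closed image, and satisfies ι(γC^ω) = ι(γ)C^ω ∩ ι(C^ω). -/
theorem iota_properties {C : Type u} [Nonempty C] (D : Set (List C)) (c0 : C)
    (hD : ([] : List C) ∈ D) :
    Function.Injective (iotaSeq D c0) ∧
    @IsClosed _ (seqTop C) (Set.range (iotaSeq D c0)) ∧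
    ∀ γ : List C,
      iotaSeq D c0 '' extω γ = extω (iota D c0 γ) ∩ Set.range (iotaSeq D c0) :=
  iota_properties_general D c0
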